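/- Let k > 0 and r > 0, and let W : [−r, r] → ℝ be continuous on [−r, r], twice continuously differentiable on (−r, r), and satisfy W(x) > 0 and W''(x) ≥ 2 k² W(x) for every x ∈ (−r, r). Then W(0) ≤ e^{1 − k r} · max{ W(−r), W(r) }. -/

import Mathlib

/-!
Symmetrize: `U x = W x + W (-x)` is even and positive, so `U'' ≥ 2 k² U ≥ k² U`. For such a
function the Wronskian `U' cosh (k x) - k U sinh (k x)` of `U` and `cosh (k ·)` has derivative
`(U'' - k² U) cosh (k x) ≥ 0` and vanishes at `0`, so `U / cosh (k ·)` is nondecreasing on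
`[0, r]`. Hence `2 W 0 cosh (k r) ≤ W r + W (-r)`, and `cosh (k r) ≥ e^{k r} / 2 ≥ e^{k r - 1}`.
-/

open Set Real

theorem HasDerivAt.add_comp_neg {f : ℝ → ℝ} {a b x : ℝ} (ha : HasDerivAt f a x)
    (hb : HasDerivAt f b (-x)) : HasDerivAt (fun y => f y + f (-y)) (a - b) x :=
  (ha.add (hb.comp x (hasDerivAt_neg x))).congr_deriv (by ring)

theorem HasDerivAt.sub_comp_neg {f : ℝ → ℝ} {a b x : ℝ} (ha : HasDerivAt f a x)
    (hb : HasDerivAt f b (-x)) : HasDerivAt (fun y => f y - f (-y)) (a + b) x :=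
  (ha.sub (hb.comp x (hasDerivAt_neg x))).congr_deriv (by ring)

theorem hasDerivAt_cosh_const_mul (k x : ℝ) :
    HasDerivAt (fun y => cosh (k * y)) (k * sinh (k * x)) x := by
  simpa [mul_comm] using ((hasDerivAt_id x).const_mul k).cosh

theorem hasDerivAt_sinh_const_mul (k x : ℝ) :
    HasDerivAt (fun y => sinh (k * y)) (k * cosh (k * x)) x := by
  simpa [mul_comm] using ((hasDerivAt_id x).const_mul k).sinh

theorem mul_cosh_le_of_sq_mul_le_deriv_deriv {f f' f'' : ℝ → ℝ} {k r : ℝ} (hr : 0 ≤ r)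
    (hf : ContinuousOn f (Icc 0 r)) (hf' : ∀ x ∈ Ico 0 r, HasDerivAt f (f' x) x)
    (hf'' : ∀ x ∈ Ico 0 r, HasDerivAt f' (f'' x) x)
    (hineq : ∀ x ∈ Ioo 0 r, k ^ 2 * f x ≤ f'' x) (h0 : 0 ≤ f' 0) :
    f 0 * cosh (k * r) ≤ f r := by
  set F : ℝ → ℝ := fun x => f' x * cosh (k * x) - f x * (k * sinh (k * x))
  have hF : ∀ x ∈ Ico 0 r, HasDerivAt F ((f'' x - k ^ 2 * f x) * cosh (k * x)) x := fun x hx =>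
    (((hf'' x hx).mul (hasDerivAt_cosh_const_mul k x)).sub
      ((hf' x hx).mul ((hasDerivAt_sinh_const_mul k x).const_mul k))).congr_deriv (by ring)
  have hF_mono : MonotoneOn F (Ico 0 r) := by
    refine monotoneOn_of_hasDerivWithinAt_nonneg (convex_Ico 0 r)
      (fun x hx => (hF x hx).continuousAt.continuousWithinAt)
      (fun x hx => (hF x (interior_subset hx)).hasDerivWithinAt) fun x hx => ?_
    rw [interior_Ico] at hx
    exact mul_nonneg (sub_nonneg.2 (hineq x hx)) (cosh_pos _).le
  have hF_nonneg : ∀ x ∈ Ico 0 r, 0 ≤ F x := fun x hx =>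
    calc 0 ≤ F 0 := by simpa [F] using h0
      _ ≤ F x := hF_mono ⟨le_rfl, hx.1.trans_lt hx.2⟩ hx hx.1
  have hcosh_ne : ∀ x, cosh (k * x) ≠ 0 := fun x => (cosh_pos _).ne'
  have hg_mono : MonotoneOn (fun x => f x / cosh (k * x)) (Icc 0 r) := by
    refine monotoneOn_of_hasDerivWithinAt_nonneg (f' := fun x => F x / cosh (k * x) ^ 2)
      (convex_Icc 0 r) (hf.div (by fun_prop) fun x _ => hcosh_ne x) (fun x hx => ?_)
      (fun x hx => ?_) <;> rw [interior_Icc] at hx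
    · exact ((hf' x (Ioo_subset_Ico_self hx)).div (hasDerivAt_cosh_const_mul k x)
        (hcosh_ne x)).hasDerivWithinAt
    · exact div_nonneg (hF_nonneg x (Ioo_subset_Ico_self hx)) (sq_nonneg _)
  have := hg_mono (left_mem_Icc.2 hr) (right_mem_Icc.2 hr) hr
  dsimp only at this
  rwa [mul_zero, cosh_zero, div_one, le_div_iff₀ (cosh_pos _)] at this

theorem le_exp_one_sub_mul_of_mul_cosh_le {a b t : ℝ} (ha : 0 ≤ a) (h : a * cosh t ≤ b) :
    a ≤ exp (1 - t) * b := by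
  have hcosh : exp t / 2 ≤ cosh t := by
    rw [cosh_eq]; linarith [exp_pos (-t)]
  have htwo : (2 : ℝ) ≤ exp 1 := by linarith [add_one_le_exp (1 : ℝ)]
  calc a ≤ a * (exp 1 / 2) := le_mul_of_one_le_right ha (by linarith)
    _ = exp (1 - t) * (a * (exp t / 2)) := by rw [exp_sub]; field_simp
    _ ≤ exp (1 - t) * b := by gcongr; exact (mul_le_mul_of_nonneg_left hcosh ha).trans h

theorem comparison_estimate
    (k r : ℝ) (hr : 0 < r)
    (W : ℝ → ℝ)
    (hWcont : ContinuousOn W (Set.Icc (-r) r))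
    (hW2 : ContDiffOn ℝ 2 W (Set.Ioo (-r) r))
    (hpos : ∀ x ∈ Set.Ioo (-r) r, 0 < W x)
    (hineq : ∀ x ∈ Set.Ioo (-r) r, 2 * k ^ 2 * W x ≤ deriv (deriv W) x) :
    W 0 ≤ Real.exp (1 - k * r) * max (W (-r)) (W r) := by
  have hmem : ∀ x ∈ Ico 0 r, x ∈ Ioo (-r) r ∧ -x ∈ Ioo (-r) r := fun x hx =>
    ⟨⟨by linarith [hx.1], hx.2⟩, ⟨by linarith [hx.2], by linarith [hx.1]⟩⟩
  have hW' : ∀ x ∈ Ioo (-r) r, HasDerivAt W (deriv W x) x := fun x hx =>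
    ((hW2.contDiffAt (isOpen_Ioo.mem_nhds hx)).differentiableAt (by norm_num)).hasDerivAt
  have hW'' : ∀ x ∈ Ioo (-r) r, HasDerivAt (deriv W) (deriv (deriv W) x) x := fun x hx =>
    (((hW2.deriv_of_isOpen (m := 1) isOpen_Ioo (by norm_num)).contDiffAt
      (isOpen_Ioo.mem_nhds hx)).differentiableAt (by norm_num)).hasDerivAt
  have hcont : ContinuousOn (fun x => W x + W (-x)) (Icc 0 r) :=
    (hWcont.mono (Icc_subset_Icc (by linarith) le_rfl)).add
      (hWcont.comp continuousOn_neg fun x hx => ⟨neg_le_neg hx.2, by linarith [hx.1]⟩)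
  have heven := mul_cosh_le_of_sq_mul_le_deriv_deriv (k := k) hr.le hcont
    (fun x hx => (hW' x (hmem x hx).1).add_comp_neg (hW' _ (hmem x hx).2))
    (fun x hx => (hW'' x (hmem x hx).1).sub_comp_neg (hW'' _ (hmem x hx).2))
    (fun x hx => by
      obtain ⟨hx_mem, hx_neg_mem⟩ := hmem x (Ioo_subset_Ico_self hx)
      nlinarith [hineq x hx_mem, hineq _ hx_neg_mem, hpos x hx_mem, hpos _ hx_neg_mem, sq_nonneg k])
    (by simp)
  refine le_exp_one_sub_mul_of_mul_cosh_le (hpos 0 ⟨by linarith, hr⟩).le ?_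
  rw [neg_zero] at heven
  linarith [le_max_left (W (-r)) (W r), le_max_right (W (-r)) (W r)]
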